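/- (Lemma 14: the projection onto an asymptotically normal full-rank matrix estimator is asymptotically normal.) Let Γ ∈ ℝ^{p×d} have full column rank d ≤ p, and for each n ∈ ℕ let Γ̂_n be a random p×d matrix on a probability space. Assume that √n (Γ̂_n − Γ) converges in distribution to a centered Gaussian measure μ on ℝ^{p×d}. Then √n (P_{Γ̂_n} − P_Γ) converges in distribution to the pushforward of μ under the linear map L : ℝ^{p×d} → ℝ^{p×p} given by L(E) := Q_Γ E (ΓᵀΓ)⁻¹ Γᵀ + Γ (ΓᵀΓ)⁻¹ Eᵀ Q_Γ; in particular, the limit is a centered Gaussian measure on ℝ^{p×p}. (In vec coordinates, if μ has covariance matrix V then the limit covariance is (I_{p²} + K_{pp})(Γ(ΓᵀΓ)⁻¹ ⊗ Q_Γ) V ((ΓᵀΓ)⁻¹Γᵀ ⊗ Q_Γ)(I_{p²} + K_{pp}).) -/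

import Mathlib

/-!
`√n (P_{Γ̂_n} − P_Γ)` is `√n` times an increment of the map `proj : M ↦ M (MᵀM)⁻¹ Mᵀ`, which
is differentiable at `Γ` (where `ΓᵀΓ` is invertible) with derivative `L`, by the product rule
and `d(S⁻¹) = -S⁻¹ dS S⁻¹`. Since `Z_n := √n (Γ̂_n − Γ)` converges in distribution it is bounded
in probability, and the difference quotients `c (f (x + c⁻¹ z) − f x)` converge to `f' z`
uniformly on balls as `c → ∞`; hence `√n (P_{Γ̂_n} − P_Γ) − L Z_n → 0` in probability and the
limit law is that of `L Z`, the image of `μ` under `L` (delta method). Linear images of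
centered Gaussian measures are centered Gaussian.
-/

open Matrix MeasureTheory Filter

namespace Stmt11

attribute [local instance] Matrix.normedAddCommGroup Matrix.normedSpace

/-- Borel measurable structure on spaces of real matrices. -/
noncomputable local instance {m n : Type*} [Fintype m] [Fintype n] :
    MeasurableSpace (Matrix m n ℝ) := borel _

noncomputable local instance {m n : Type*} [Fintype m] [Fintype n] :
    BorelSpace (Matrix m n ℝ) := ⟨rfl⟩

/-- A centered Gaussian measure on a finite-dimensional real vector space: a probability
measure under which every continuous linear functional has a centered real Gaussian
distribution. -/
def IsCenteredGaussian {E : Type*} [NormedAddCommGroup E] [NormedSpace ℝ E]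
    [MeasurableSpace E] (μ : Measure E) : Prop :=
  IsProbabilityMeasure μ ∧
    ∀ L : E →L[ℝ] ℝ, ∃ v : NNReal, μ.map L = ProbabilityTheory.gaussianReal 0 v

/-- Convergence in distribution of a sequence of random elements to a probability
measure: weak convergence of the laws, i.e. convergence of integrals of all bounded
continuous test functions. -/
def TendstoInDistribution {Ω E : Type*} [MeasurableSpace Ω] [TopologicalSpace E]
    [MeasurableSpace E] (P : Measure Ω) (X : ℕ → Ω → E) (μ : Measure E) : Prop :=
  ∀ g : BoundedContinuousFunction E ℝ,
    Tendsto (fun n => ∫ ω, g (X n ω) ∂P) atTop (nhds (∫ x, g x ∂μ))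

/-- Orthogonal projection onto the column space of `M` (with the convention that the
inverse of a non-invertible matrix is the zero matrix). -/
noncomputable def proj {p d : ℕ} (M : Matrix (Fin p) (Fin d) ℝ) :
    Matrix (Fin p) (Fin p) ℝ :=
  M * (Mᵀ * M)⁻¹ * Mᵀ

/-- The linear map `E ↦ Q_Γ E (ΓᵀΓ)⁻¹ Γᵀ + Γ (ΓᵀΓ)⁻¹ Eᵀ Q_Γ`. -/
noncomputable def Lmap {p d : ℕ} (Γ : Matrix (Fin p) (Fin d) ℝ)
    (E : Matrix (Fin p) (Fin d) ℝ) : Matrix (Fin p) (Fin p) ℝ :=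
  ((1 : Matrix (Fin p) (Fin p) ℝ) - proj Γ) * E * (Γᵀ * Γ)⁻¹ * Γᵀ
    + Γ * (Γᵀ * Γ)⁻¹ * Eᵀ * ((1 : Matrix (Fin p) (Fin p) ℝ) - proj Γ)

open scoped Topology ENNReal

/- `Matrix` is not reducible to a function type, and the sup-norm topology of
`Matrix.normedAddCommGroup` is `instTopologicalSpaceMatrix` only after unfolding, so instance
search finds neither of these. -/
local instance {m n : Type*} [Fintype m] [Fintype n] :
    @BorelSpace (Matrix m n ℝ) PseudoMetricSpace.toUniformSpace.toTopologicalSpace _ := ⟨rfl⟩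

local instance {m n : Type*} [Fintype m] [Fintype n] :
    SecondCountableTopology (Matrix m n ℝ) :=
  inferInstanceAs (SecondCountableTopology (m → n → ℝ))

section Distribution

variable {Ω Ω' : Type*} {mΩ : MeasurableSpace Ω} {mΩ' : MeasurableSpace Ω'}
  {P : Measure Ω} [IsProbabilityMeasure P] {P' : Measure Ω'} [IsProbabilityMeasure P']

lemma tendstoInDistribution_map_iff {E : Type*} [TopologicalSpace E] {mE : MeasurableSpace E}
    [OpensMeasurableSpace E] {X : ℕ → Ω → E} (hX : ∀ n, Measurable (X n)) {Z : Ω' → E}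
    (hZ : Measurable Z) :
    Stmt11.TendstoInDistribution P X (P'.map Z) ↔
      MeasureTheory.TendstoInDistribution X atTop Z (fun _ => P) P' := by
  have hint : ∀ (g : BoundedContinuousFunction E ℝ) n,
      ∫ ω, g (X n ω) ∂P = ∫ x, g x ∂(P.map (X n)) := fun g n =>
    (integral_map (hX n).aemeasurable g.continuous.aestronglyMeasurable).symm
  constructor
  · intro h
    refine ⟨fun n => (hX n).aemeasurable, hZ.aemeasurable, ?_⟩
    refine ProbabilityMeasure.tendsto_iff_forall_integral_tendsto.2 fun g => ?_
    simpa only [ProbabilityMeasure.coe_mk, hint] using h g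
  · intro h g
    simpa only [hint, ProbabilityMeasure.coe_mk] using
      ProbabilityMeasure.tendsto_iff_forall_integral_tendsto.1 h.tendsto g

lemma _root_.MeasureTheory.TendstoInDistribution.exists_eventually_measure_norm_gt_lt {E : Type*}
    [NormedAddCommGroup E] {mE : MeasurableSpace E} [BorelSpace E] {X : ℕ → Ω → E}
    {Z : Ω' → E} (h : MeasureTheory.TendstoInDistribution X atTop Z (fun _ => P) P')
    {ε : ℝ≥0∞} (hε : 0 < ε) : ∃ r : ℝ, ∀ᶠ n in atTop, P {ω | r < ‖X n ω‖} < ε := by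
  set tail : ℕ → Set E := fun k => {x | (k : ℝ) ≤ ‖x‖}
  have htail_closed : ∀ k, IsClosed (tail k) := fun k =>
    isClosed_le continuous_const continuous_norm
  have htail_lim : Tendsto (fun k => P'.map Z (tail k)) atTop (𝓝 0) := by
    have hempty : ⋂ k, tail k = ∅ := by
      refine Set.eq_empty_of_forall_notMem fun x hx => ?_
      obtain ⟨k, hk⟩ := exists_nat_gt ‖x‖
      exact (Set.mem_iInter.1 hx k).not_gt hk
    have := tendsto_measure_iInter_atTop (μ := P'.map Z)
      (fun k => (htail_closed k).measurableSet.nullMeasurableSet)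
      (fun k l hkl x (hx : (l : ℝ) ≤ ‖x‖) => le_trans (by exact_mod_cast hkl) hx)
      ⟨0, measure_ne_top _ _⟩
    rwa [hempty, measure_empty] at this
  obtain ⟨k, hk⟩ := (htail_lim.eventually_lt_const hε).exists
  refine ⟨k, ?_⟩
  have hlimsup := ProbabilityMeasure.limsup_measure_closed_le_of_tendsto h.tendsto (htail_closed k)
  filter_upwards [eventually_lt_of_limsup_lt (hlimsup.trans_lt hk)] with n hn
  rw [ProbabilityMeasure.coe_mk, Measure.map_apply_of_aemeasurable (h.forall_aemeasurable n)
    (htail_closed k).measurableSet] at hn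
  exact (measure_mono fun ω (hω : (k : ℝ) < ‖X n ω‖) => hω.le).trans_lt hn

theorem IsCenteredGaussian.map {E F : Type*} [NormedAddCommGroup E] [NormedSpace ℝ E]
    {mE : MeasurableSpace E} [OpensMeasurableSpace E] [NormedAddCommGroup F] [NormedSpace ℝ F]
    {mF : MeasurableSpace F} [BorelSpace F] {μ : Measure E} (hμ : IsCenteredGaussian μ)
    (L : E →L[ℝ] F) : IsCenteredGaussian (μ.map L) := by
  obtain ⟨hprob, hgauss⟩ := hμ
  refine ⟨Measure.isProbabilityMeasure_map L.continuous.aemeasurable, fun φ => ?_⟩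
  obtain ⟨v, hv⟩ := hgauss (φ.comp L)
  exact ⟨v, by rwa [Measure.map_map φ.continuous.measurable L.continuous.measurable]⟩

end Distribution

section DeltaMethod

variable {E F : Type*} [NormedAddCommGroup E] [NormedSpace ℝ E]
  [NormedAddCommGroup F] [NormedSpace ℝ F]

theorem _root_.HasFDerivAt.tendstoUniformlyOn_smul_sub {f : E → F} {f' : E →L[ℝ] F} {x : E}
    (hf : HasFDerivAt f f' x) (r : ℝ) :
    TendstoUniformlyOn (fun (c : ℝ) z => c • (f (x + c⁻¹ • z) - f x)) f' atTop
      (Metric.closedBall 0 r) := by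
  rw [Metric.tendstoUniformlyOn_iff]
  intro ε hε
  set K := ε / (2 * (|r| + 1))
  have hK : 0 < K := by positivity
  obtain ⟨δ, hδ, hsmall⟩ := Metric.eventually_nhds_iff.1
    ((hasFDerivAt_iff_isLittleO_nhds_zero.1 hf).def hK)
  filter_upwards [eventually_gt_atTop (|r| / δ), eventually_gt_atTop 0] with c hcr hc z hz
  have hz : ‖z‖ ≤ |r| := (mem_closedBall_zero_iff.1 hz).trans (le_abs_self r)
  have hnorm : ‖c⁻¹ • z‖ = c⁻¹ * ‖z‖ := by
    rw [norm_smul, Real.norm_of_nonneg (inv_nonneg.2 hc.le)]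
  have hh : dist (c⁻¹ • z) 0 < δ := by
    rw [dist_zero_right, hnorm, inv_mul_lt_iff₀ hc]
    exact hz.trans_lt ((div_lt_iff₀ hδ).1 hcr)
  have hrem : f' z - c • (f (x + c⁻¹ • z) - f x)
      = -(c • (f (x + c⁻¹ • z) - f x - f' (c⁻¹ • z))) := by
    simp only [map_smul, smul_sub, smul_inv_smul₀ hc.ne']
    abel
  rw [dist_eq_norm, hrem, norm_neg, norm_smul, Real.norm_of_nonneg hc.le]
  calc c * ‖f (x + c⁻¹ • z) - f x - f' (c⁻¹ • z)‖ ≤ c * (K * ‖c⁻¹ • z‖) := by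
        gcongr; exact hsmall hh
    _ = K * ‖z‖ := by rw [hnorm]; field_simp
    _ ≤ K * |r| := by gcongr
    _ < ε := by
        rw [div_mul_eq_mul_div, div_lt_iff₀ (by positivity)]
        nlinarith [abs_nonneg r]

variable {Ω Ω' : Type*} {mΩ : MeasurableSpace Ω} {mΩ' : MeasurableSpace Ω'}
  {P : Measure Ω} [IsProbabilityMeasure P] {P' : Measure Ω'} [IsProbabilityMeasure P']
  {mE : MeasurableSpace E} [BorelSpace E]
  {mF : MeasurableSpace F} [BorelSpace F] [SecondCountableTopology F]

theorem _root_.MeasureTheory.TendstoInDistribution.delta_method {X : ℕ → Ω → E} {Z : Ω' → E}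
    {c : ℕ → ℝ} (hc : Tendsto c atTop atTop) {f : E → F} {f' : E →L[ℝ] F} {x : E} (hf : HasFDerivAt f f' x)
    (hf_meas : Measurable f) (hX : ∀ n, AEMeasurable (X n) P)
    (h : MeasureTheory.TendstoInDistribution (fun n ω => c n • (X n ω - x)) atTop Z
      (fun _ => P) P') :
    MeasureTheory.TendstoInDistribution (fun n ω => c n • (f (X n ω) - f x)) atTop (f' ∘ Z)
      (fun _ => P) P' := by
  refine tendstoInDistribution_of_tendstoInMeasure_sub _ _ (h.continuous_comp f'.continuous) ?_
    fun n => ((hf_meas.comp_aemeasurable (hX n)).sub_const _).const_smul _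
  rw [tendstoInMeasure_iff_norm]
  intro ε hε
  rw [ENNReal.tendsto_atTop_zero]
  intro δ hδ
  obtain ⟨r, hr⟩ := h.exists_eventually_measure_norm_gt_lt hδ
  have hquot := hc.eventually
    (Metric.tendstoUniformlyOn_iff.1 (hf.tendstoUniformlyOn_smul_sub r) ε hε)
  obtain ⟨N, hN⟩ := eventually_atTop.1 (hr.and (hquot.and (hc.eventually_gt_atTop 0)))
  refine ⟨N, fun n hn => ?_⟩
  obtain ⟨hrn, hqn, hcn⟩ := hN n hn
  refine le_trans (measure_mono fun ω hω => ?_) hrn.le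
  simp only [Set.mem_ofPred_eq, Pi.sub_apply, Pi.zero_apply, sub_zero, Function.comp_apply] at hω ⊢
  by_contra! hle
  have hXω : x + (c n)⁻¹ • (c n • (X n ω - x)) = X n ω := by
    rw [inv_smul_smul₀ hcn.ne']
    abel
  have := hqn _ (mem_closedBall_zero_iff.2 hle)
  rw [hXω, dist_comm, dist_eq_norm] at this
  exact hω.not_gt this

end DeltaMethod

section MatrixCalculus

variable {l m n : Type*}

noncomputable def mulCLM [Fintype l] [Fintype m] [Fintype n] :
    Matrix l m ℝ →L[ℝ] Matrix m n ℝ →L[ℝ] Matrix l n ℝ :=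
  LinearMap.toContinuousLinearMap
    (LinearMap.toContinuousLinearMap.toLinearMap ∘ₗ mulLinearMap ℝ)

noncomputable def mulLeftCLM [Fintype m] [Fintype n] (A : Matrix l m ℝ) :
    Matrix m n ℝ →L[ℝ] Matrix l n ℝ :=
  LinearMap.toContinuousLinearMap (mulLeftLinearMap n ℝ A)

noncomputable def mulRightCLM [Fintype l] [Fintype m] (B : Matrix m n ℝ) :
    Matrix l m ℝ →L[ℝ] Matrix l n ℝ :=
  LinearMap.toContinuousLinearMap (mulRightLinearMap l ℝ B)

noncomputable def transposeCLM [Fintype m] [Fintype n] : Matrix m n ℝ →L[ℝ] Matrix n m ℝ :=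
  LinearMap.toContinuousLinearMap (Matrix.transposeLinearEquiv m n ℝ ℝ).toLinearMap

@[simp] lemma mulCLM_apply [Fintype l] [Fintype m] [Fintype n] (A : Matrix l m ℝ)
    (B : Matrix m n ℝ) : mulCLM A B = A * B := rfl
@[simp] lemma mulLeftCLM_apply [Fintype m] [Fintype n] (A : Matrix l m ℝ) (B : Matrix m n ℝ) :
    mulLeftCLM A B = A * B := rfl
@[simp] lemma mulRightCLM_apply [Fintype l] [Fintype m] (A : Matrix l m ℝ) (B : Matrix m n ℝ) :
    mulRightCLM B A = A * B := rfl

theorem _root_.HasFDerivAt.matrix_mul [Fintype l] [Fintype m] [Fintype n]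
    {E : Type*} [NormedAddCommGroup E] [NormedSpace ℝ E]
    {f : E → Matrix l m ℝ} {g : E → Matrix m n ℝ}
    {f' : E →L[ℝ] Matrix l m ℝ} {g' : E →L[ℝ] Matrix m n ℝ} {x : E}
    (hf : HasFDerivAt f f' x) (hg : HasFDerivAt g g' x) :
    HasFDerivAt (fun y => f y * g y)
      ((mulLeftCLM (f x)).comp g' + (mulRightCLM (g x)).comp f') x :=
  mulCLM.hasFDerivAt_of_bilinear hf hg

theorem hasFDerivAt_matrix_inv [Fintype m] [DecidableEq m] {S : Matrix m m ℝ}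
    (hS : IsUnit S.det) :
    HasFDerivAt Inv.inv ((mulLeftCLM (-S⁻¹)).comp (mulRightCLM S⁻¹)) S := by
  have hinv : Tendsto (fun M : Matrix m m ℝ => S⁻¹ - M⁻¹) (𝓝 S) (𝓝 0) := by
    obtain ⟨u, hu⟩ := hS
    have := continuousAt_matrix_inv S (hu ▸ NormedRing.inverse_continuousAt u)
    simpa using (tendsto_const_nhds (x := S⁻¹)).sub this
  -- `M⁻¹ - S⁻¹ = -M⁻¹ (M - S) S⁻¹` makes the remainder bilinear in an `o(1)` and an `O(M - S)`
  -- factor.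
  have hrem : ∀ᶠ M in 𝓝 S, M⁻¹ - S⁻¹ - ((mulLeftCLM (-S⁻¹)).comp (mulRightCLM S⁻¹)) (M - S)
      = mulCLM (S⁻¹ - M⁻¹) (mulRightCLM S⁻¹ (M - S)) := by
    filter_upwards [continuous_id.matrix_det.continuousAt.eventually (Units.isOpen.mem_nhds hS)]
      with M (hM : IsUnit M.det)
    have hdiff : M⁻¹ - S⁻¹ = -(M⁻¹ * (M - S) * S⁻¹) := by
      rw [Matrix.mul_sub, Matrix.sub_mul, Matrix.nonsing_inv_mul _ hM, Matrix.one_mul,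
        Matrix.mul_assoc, Matrix.mul_nonsing_inv _ hS, Matrix.mul_one]
      abel
    simp only [ContinuousLinearMap.comp_apply, mulLeftCLM_apply, mulRightCLM_apply, mulCLM_apply,
      hdiff]
    noncomm_ring
  refine HasFDerivAt.of_isLittleO ?_
  refine (Asymptotics.isLittleO_congr hrem .rfl).2 ?_
  refine (mulCLM (l := m) (m := m) (n := m)).isBoundedBilinearMap.isBigO_comp.trans_isLittleO ?_
  have := ((Asymptotics.isLittleO_one_iff ℝ).2 hinv).norm_left.mul_isBigO
    ((mulRightCLM S⁻¹).isBigO_sub (𝓝 S) S).norm_left.norm_right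
  simp only [one_mul, Asymptotics.isLittleO_norm_right] at this
  exact this

end MatrixCalculus

section Projection

variable {p d : ℕ}

noncomputable def LmapCLM (Γ : Matrix (Fin p) (Fin d) ℝ) :
    Matrix (Fin p) (Fin d) ℝ →L[ℝ] Matrix (Fin p) (Fin p) ℝ :=
  LinearMap.toContinuousLinearMap
    { toFun := Lmap Γ
      map_add' := fun E F => by
        simp only [Lmap, Matrix.add_mul, Matrix.mul_add, Matrix.transpose_add]
        abel
      map_smul' := fun c E => by
        simp only [Lmap, Matrix.transpose_smul, Matrix.smul_mul, Matrix.mul_smul, smul_add,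
          RingHom.id_apply] }

theorem hasFDerivAt_proj {Γ : Matrix (Fin p) (Fin d) ℝ} (hΓ : IsUnit (Γᵀ * Γ).det) :
    HasFDerivAt proj (LmapCLM Γ) Γ := by
  have hgram := transposeCLM.hasFDerivAt.matrix_mul (hasFDerivAt_id Γ)
  have hinv := HasFDerivAt.comp (f := fun M : Matrix (Fin p) (Fin d) ℝ => Mᵀ * M) Γ
    (hasFDerivAt_matrix_inv hΓ) hgram
  have h := ((hasFDerivAt_id Γ).matrix_mul hinv).matrix_mul transposeCLM.hasFDerivAt
  refine HasFDerivAt.congr_fderiv (f := proj) h (ContinuousLinearMap.ext fun H => ?_)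
  -- `simp` does not see through the chain-rule derivative (its instances come through the
  -- normed structure), but it unfolds definitionally.
  show Γ * (Γᵀ * Γ)⁻¹ * Hᵀ
      + (Γ * (-(Γᵀ * Γ)⁻¹ * ((Γᵀ * H + Hᵀ * Γ) * (Γᵀ * Γ)⁻¹)) + H * (Γᵀ * Γ)⁻¹) * Γᵀ = Lmap Γ H
  simp only [Lmap, proj, Matrix.sub_mul, Matrix.mul_sub, Matrix.add_mul, Matrix.mul_add,
    Matrix.neg_mul, Matrix.mul_neg, Matrix.one_mul, Matrix.mul_one, Matrix.mul_assoc]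
  abel

theorem measurable_matrix_inv {n : Type*} [Fintype n] [DecidableEq n] :
    Measurable (Inv.inv : Matrix n n ℝ → Matrix n n ℝ) := by
  have : (Inv.inv : Matrix n n ℝ → Matrix n n ℝ) = fun M => M.det⁻¹ • M.adjugate := by
    funext M
    rw [Matrix.inv_def, Ring.inverse_eq_inv']
  rw [this]
  exact (continuous_id.matrix_det.measurable.inv).smul continuous_id.matrix_adjugate.measurable

theorem measurable_proj :
    Measurable (proj : Matrix (Fin p) (Fin d) ℝ → Matrix (Fin p) (Fin p) ℝ) := by
  have hgram : Measurable fun M : Matrix (Fin p) (Fin d) ℝ => (Mᵀ * M)⁻¹ :=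
    measurable_matrix_inv.comp (continuous_id.matrix_transpose.matrix_mul continuous_id).measurable
  have hsandwich : Continuous fun q : Matrix (Fin p) (Fin d) ℝ × Matrix (Fin d) (Fin d) ℝ =>
      q.1 * q.2 * q.1ᵀ :=
    (continuous_fst.matrix_mul continuous_snd).matrix_mul continuous_fst.matrix_transpose
  exact hsandwich.measurable.comp (measurable_id.prodMk hgram)

end Projection

theorem statement11 {p d : ℕ}
    (Γ : Matrix (Fin p) (Fin d) ℝ) (hrank : IsUnit (Γᵀ * Γ).det)
    {Ω : Type*} [MeasurableSpace Ω] (P : Measure Ω) [IsProbabilityMeasure P]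
    (Γhat : ℕ → Ω → Matrix (Fin p) (Fin d) ℝ)
    (hmeas : ∀ n, Measurable (Γhat n))
    (μ : Measure (Matrix (Fin p) (Fin d) ℝ)) (hμ : IsCenteredGaussian μ)
    (hconv : TendstoInDistribution P
      (fun n ω => (Real.sqrt n) • (Γhat n ω - Γ)) μ) :
    TendstoInDistribution P
        (fun n ω => (Real.sqrt n) • (proj (Γhat n ω) - proj Γ))
        (μ.map (Lmap Γ))
      ∧ IsCenteredGaussian (μ.map (Lmap Γ)) := by
  have := hμ.1
  refine ⟨?_, hμ.map (LmapCLM Γ)⟩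
  have hZ : ∀ n : ℕ, Measurable fun ω => √(n : ℝ) • (Γhat n ω - Γ) := fun n =>
    ((hmeas n).sub_const Γ).fun_const_smul _
  have hY : ∀ n : ℕ, Measurable fun ω => √(n : ℝ) • (proj (Γhat n ω) - proj Γ) := fun n =>
    ((measurable_proj.comp (hmeas n)).sub_const _).fun_const_smul _
  have hlim : MeasureTheory.TendstoInDistribution (fun (n : ℕ) ω => √(n : ℝ) • (Γhat n ω - Γ))
      atTop id (fun _ => P) μ := by
    rw [← tendstoInDistribution_map_iff hZ measurable_id, Measure.map_id]
    exact hconv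
  have hdelta := hlim.delta_method (Real.tendsto_sqrt_atTop.comp tendsto_natCast_atTop_atTop)
    (hasFDerivAt_proj hrank) measurable_proj fun n => (hmeas n).aemeasurable
  exact (tendstoInDistribution_map_iff hY ((LmapCLM Γ).continuous.measurable.comp measurable_id)).2
    hdelta

end Stmt11
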